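/- arXiv:1109.4659 — 2 statements merged into one kernel-verified Lean document; each statement's English description precedes it below -/
import Mathlib

section
/- Let n, m ≥ 0 be integers, α > 0 real, and a ∈ ℂ. The function F(t,s) = ∏_{i=1}^n (1−t_i)^{−a} · ∏_{j=1}^m (1−s_j)^{αa} (principal branch powers, defined for all t_i, s_j ∈ ℂ∖[1,∞)) satisfies: (1−t_i)∂F/∂t_i = aF for each 1 ≤ i ≤ n; (1−s_j)∂F/∂s_j = −αaF for each 1 ≤ j ≤ m; the cancellation condition ∂F/∂t_i + (1/α)∂F/∂s_j = 0 at every point with t_i = s_j; and F(0,…,0) = 1. Moreover, F is the unique function analytic on a neighborhood of the origin in ℂ^{n+m} satisfying these first-order equations together with F(0,…,0) = 1. -/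
/-!
Each factor satisfies `(1 - z) · d/dz (1 - z)^c = -c (1 - z)^c` off the slit, which gives the
two first-order equations; the cancellation condition is their combination at `tᵢ = sⱼ`.
For uniqueness, if `G` and `F` solve the same system and `F ≠ 0`, the quotient rule kills every
partial derivative of `G / F`, so its Fréchet derivative vanishes and `G / F` is constant on a
small ball around the origin, where it equals `1`.
-/

open Finset

/-- Partial derivative of `F(t,s)` in the variable `t i`. -/
noncomputable def pdT {n m : ℕ} (F : (Fin n → ℂ) → (Fin m → ℂ) → ℂ) (i : Fin n)
    (t : Fin n → ℂ) (s : Fin m → ℂ) : ℂ :=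
  deriv (fun z => F (Function.update t i z) s) (t i)

/-- Partial derivative of `F(t,s)` in the variable `s j`. -/
noncomputable def pdS {n m : ℕ} (F : (Fin n → ℂ) → (Fin m → ℂ) → ℂ) (j : Fin m)
    (t : Fin n → ℂ) (s : Fin m → ℂ) : ℂ :=
  deriv (fun z => F t (Function.update s j z)) (s j)

/-- The slit complex plane `ℂ ∖ [1,∞)`. -/
def slitOne : Set ℂ := {z : ℂ | z.im ≠ 0 ∨ z.re < 1}

/-- `₁SF₀^{(α)}(a;t,s) = ∏ᵢ (1-tᵢ)^{-a} ∏ⱼ (1-sⱼ)^{αa}`, principal branch powers. -/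
noncomputable def oneSF0 (n m : ℕ) (α : ℝ) (a : ℂ)
    (t : Fin n → ℂ) (s : Fin m → ℂ) : ℂ :=
  (∏ i, (1 - t i) ^ (-a)) * ∏ j, (1 - s j) ^ ((α : ℂ) * a)

open Complex Function

lemma one_sub_mem_slitPlane_of_mem_slitOne {z : ℂ} (hz : z ∈ slitOne) : 1 - z ∈ slitPlane := by
  rcases hz with h | h
  · exact Or.inr (by simpa using h)
  · exact Or.inl (by simpa using h)

lemma one_sub_ne_zero_of_mem_slitOne {z : ℂ} (hz : z ∈ slitOne) : 1 - z ≠ 0 :=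
  slitPlane_ne_zero (one_sub_mem_slitPlane_of_mem_slitOne hz)

lemma mem_slitOne_of_norm_lt_one {z : ℂ} (hz : ‖z‖ < 1) : z ∈ slitOne :=
  Or.inr ((le_abs_self z.re).trans_lt ((abs_re_le_norm z).trans_lt hz))

lemma mem_slitOne_of_mem_ball {n m : ℕ} {p : (Fin n → ℂ) × (Fin m → ℂ)}
    (hp : p ∈ Metric.ball 0 1) : (∀ i, p.1 i ∈ slitOne) ∧ ∀ j, p.2 j ∈ slitOne := by
  rw [mem_ball_zero_iff] at hp
  exact ⟨fun i => mem_slitOne_of_norm_lt_one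
      ((norm_le_pi_norm p.1 i).trans_lt ((norm_fst_le p).trans_lt hp)),
    fun j => mem_slitOne_of_norm_lt_one
      ((norm_le_pi_norm p.2 j).trans_lt ((norm_snd_le p).trans_lt hp))⟩

lemma one_sub_mul_deriv_one_sub_cpow_mul {z : ℂ} (c C : ℂ) (hz : 1 - z ∈ slitPlane) :
    (1 - z) * deriv (fun w => (1 - w) ^ c * C) z = -c * ((1 - z) ^ c * C) := by
  have h : HasDerivAt (fun w => (1 - w) ^ c * C) (c * (1 - z) ^ (c - 1) * -1 * C) z :=
    (((hasDerivAt_id' z).const_sub 1).cpow_const hz).mul_const C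
  rw [h.deriv, cpow_sub _ _ (slitPlane_ne_zero hz), cpow_one]
  field_simp [slitPlane_ne_zero hz]

theorem Finset.prod_comp_update {ι α M : Type*} [Fintype ι] [DecidableEq ι] [CommMonoid M]
    (f : α → M) (t : ι → α) (i : ι) (z : α) :
    ∏ k, f (update t i z k) = f z * ∏ k ∈ univ \ {i}, f (t k) := by
  simp_rw [← comp_apply (f := f), comp_update, prod_update_of_mem (mem_univ i)]

section oneSF0

variable {n m : ℕ} {α : ℝ} {a : ℂ} {t : Fin n → ℂ} {s : Fin m → ℂ}

lemma oneSF0_update_fst (i : Fin n) (z : ℂ) :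
    oneSF0 n m α a (update t i z) s = (1 - z) ^ (-a) *
      ((∏ k ∈ univ \ {i}, (1 - t k) ^ (-a)) * ∏ j, (1 - s j) ^ ((α : ℂ) * a)) := by
  rw [oneSF0, prod_comp_update (fun w => (1 - w) ^ (-a)), mul_assoc]

lemma oneSF0_update_snd (j : Fin m) (z : ℂ) :
    oneSF0 n m α a t (update s j z) = (1 - z) ^ ((α : ℂ) * a) *
      ((∏ i, (1 - t i) ^ (-a)) * ∏ k ∈ univ \ {j}, (1 - s k) ^ ((α : ℂ) * a)) := by
  rw [oneSF0, prod_comp_update (fun w => (1 - w) ^ ((α : ℂ) * a))]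
  ring

lemma one_sub_mul_pdT_oneSF0 {i : Fin n} (hi : t i ∈ slitOne) :
    (1 - t i) * pdT (oneSF0 n m α a) i t s = a * oneSF0 n m α a t s := by
  have h := one_sub_mul_deriv_one_sub_cpow_mul (-a)
    ((∏ k ∈ univ \ {i}, (1 - t k) ^ (-a)) * ∏ j, (1 - s j) ^ ((α : ℂ) * a))
    (one_sub_mem_slitPlane_of_mem_slitOne hi)
  simp only [pdT, oneSF0_update_fst]
  rw [h, ← oneSF0_update_fst, update_eq_self, neg_neg]

lemma one_sub_mul_pdS_oneSF0 {j : Fin m} (hj : s j ∈ slitOne) :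
    (1 - s j) * pdS (oneSF0 n m α a) j t s = -(α : ℂ) * a * oneSF0 n m α a t s := by
  have h := one_sub_mul_deriv_one_sub_cpow_mul ((α : ℂ) * a)
    ((∏ i, (1 - t i) ^ (-a)) * ∏ k ∈ univ \ {j}, (1 - s k) ^ ((α : ℂ) * a))
    (one_sub_mem_slitPlane_of_mem_slitOne hj)
  simp only [pdS, oneSF0_update_snd]
  rw [h, ← oneSF0_update_snd, update_eq_self]
  ring

lemma pdT_add_one_div_mul_pdS_oneSF0 (hα : α ≠ 0) {i : Fin n} {j : Fin m} (hi : t i ∈ slitOne)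
    (hj : s j ∈ slitOne) (hij : t i = s j) :
    pdT (oneSF0 n m α a) i t s + 1 / (α : ℂ) * pdS (oneSF0 n m α a) j t s = 0 := by
  have hα' : (α : ℂ) ≠ 0 := ofReal_ne_zero.2 hα
  have h : (1 - t i) * (pdT (oneSF0 n m α a) i t s + 1 / (α : ℂ) * pdS (oneSF0 n m α a) j t s)
      = 0 := by
    linear_combination one_sub_mul_pdT_oneSF0 (s := s) (α := α) (a := a) hi
      + 1 / (α : ℂ) * one_sub_mul_pdS_oneSF0 (t := t) (α := α) (a := a) hj
      - 1 / (α : ℂ) * pdS (oneSF0 n m α a) j t s * hij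
      - a * oneSF0 n m α a t s * mul_inv_cancel₀ hα'
  exact (mul_eq_zero.1 h).resolve_left (one_sub_ne_zero_of_mem_slitOne hi)

lemma oneSF0_ne_zero (ht : ∀ i, t i ∈ slitOne) (hs : ∀ j, s j ∈ slitOne) :
    oneSF0 n m α a t s ≠ 0 :=
  mul_ne_zero
    (prod_ne_zero_iff.2 fun i _ => cpow_ne_zero_iff.2 (.inl (one_sub_ne_zero_of_mem_slitOne (ht i))))
    (prod_ne_zero_iff.2 fun j _ => cpow_ne_zero_iff.2 (.inl (one_sub_ne_zero_of_mem_slitOne (hs j))))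

lemma differentiableAt_oneSF0 (ht : ∀ i, t i ∈ slitOne) (hs : ∀ j, s j ∈ slitOne) :
    DifferentiableAt ℂ (fun q => oneSF0 n m α a q.1 q.2) (t, s) := by
  have ht' i := one_sub_mem_slitPlane_of_mem_slitOne (ht i)
  have hs' j := one_sub_mem_slitPlane_of_mem_slitOne (hs j)
  unfold oneSF0
  fun_prop (disch := simp_all)

end oneSF0

theorem ContinuousLinearMap.eq_zero_of_map_single_prod {R M ι κ : Type*} [Semiring R]
    [TopologicalSpace R] [AddCommMonoid M] [TopologicalSpace M] [Module R M]
    [Finite ι] [Finite κ] [DecidableEq ι] [DecidableEq κ]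
    (L : (ι → R) × (κ → R) →L[R] M) (h₁ : ∀ i, L (Pi.single i 1, 0) = 0)
    (h₂ : ∀ j, L (0, Pi.single j 1) = 0) : L = 0 :=
  coe_injective <| LinearMap.prod_ext
    (LinearMap.pi_ext' fun i => LinearMap.ext_ring (by simpa using h₁ i))
    (LinearMap.pi_ext' fun j => LinearMap.ext_ring (by simpa using h₂ j))

section PartialDerivatives

variable {𝕜 ι E F : Type*} [NontriviallyNormedField 𝕜] [DecidableEq ι] [Fintype ι]
  [NormedAddCommGroup E] [NormedSpace 𝕜 E] [NormedAddCommGroup F] [NormedSpace 𝕜 F]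

theorem hasDerivAt_update_fst {Φ : (ι → 𝕜) × E → F} {t : ι → 𝕜} {s : E}
    (hΦ : DifferentiableAt 𝕜 Φ (t, s)) (i : ι) :
    HasDerivAt (fun z => Φ (update t i z, s)) (fderiv 𝕜 Φ (t, s) (Pi.single i 1, 0)) (t i) :=
  hΦ.hasFDerivAt.comp_hasDerivAt_of_eq (f := fun z => (update t i z, s)) (t i)
    ((hasDerivAt_update t i (t i)).prodMk (hasDerivAt_const _ s)) (by simp)

theorem hasDerivAt_update_snd {Φ : E × (ι → 𝕜) → F} {t : E} {s : ι → 𝕜}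
    (hΦ : DifferentiableAt 𝕜 Φ (t, s)) (j : ι) :
    HasDerivAt (fun z => Φ (t, update s j z)) (fderiv 𝕜 Φ (t, s) (0, Pi.single j 1)) (s j) :=
  hΦ.hasFDerivAt.comp_hasDerivAt_of_eq (f := fun z => (t, update s j z)) (s j)
    ((hasDerivAt_const _ t).prodMk (hasDerivAt_update s j (s j))) (by simp)

end PartialDerivatives

section
variable {n m : ℕ} {G : (Fin n → ℂ) → (Fin m → ℂ) → ℂ} {t : Fin n → ℂ} {s : Fin m → ℂ}

lemma hasDerivAt_pdT (hG : DifferentiableAt ℂ (fun q => G q.1 q.2) (t, s)) (i : Fin n) :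
    HasDerivAt (fun z => G (update t i z) s) (pdT G i t s) (t i) :=
  (hasDerivAt_update_fst hG i).differentiableAt.hasDerivAt

lemma hasDerivAt_pdS (hG : DifferentiableAt ℂ (fun q => G q.1 q.2) (t, s)) (j : Fin m) :
    HasDerivAt (fun z => G t (update s j z)) (pdS G j t s) (s j) :=
  (hasDerivAt_update_snd hG j).differentiableAt.hasDerivAt

end

theorem HasDerivAt.div_eq_zero_of_same_ode {g f : ℂ → ℂ} {g' f' q c z : ℂ}
    (hg : HasDerivAt g g' z) (hf : HasDerivAt f f' z) (hfz : f z ≠ 0) (hq : q ≠ 0)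
    (hg' : q * g' = c * g z) (hf' : q * f' = c * f z) :
    HasDerivAt (fun w => g w / f w) 0 z := by
  have hwr : g' * f z - g z * f' = 0 := (mul_eq_zero.1
    (by linear_combination f z * hg' - g z * hf' : q * (g' * f z - g z * f') = 0)).resolve_left hq
  have h := hg.div hf hfz
  rwa [hwr, zero_div] at h

def SolvesSystemOn {n m : ℕ} (b c : ℂ) (U : Set ((Fin n → ℂ) × (Fin m → ℂ)))
    (G : (Fin n → ℂ) → (Fin m → ℂ) → ℂ) : Prop :=
  (∀ p ∈ U, ∀ i, (1 - p.1 i) * pdT G i p.1 p.2 = b * G p.1 p.2) ∧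
    ∀ p ∈ U, ∀ j, (1 - p.2 j) * pdS G j p.1 p.2 = c * G p.1 p.2

section Uniqueness

variable {n m : ℕ} {b c : ℂ} {U : Set ((Fin n → ℂ) × (Fin m → ℂ))}
  {G F : (Fin n → ℂ) → (Fin m → ℂ) → ℂ}

lemma solvesSystemOn_oneSF0 (α : ℝ) (a : ℂ)
    (hU : ∀ p ∈ U, (∀ i, p.1 i ∈ slitOne) ∧ ∀ j, p.2 j ∈ slitOne) :
    SolvesSystemOn a (-(α : ℂ) * a) U (oneSF0 n m α a) :=
  ⟨fun p hp _ => one_sub_mul_pdT_oneSF0 ((hU p hp).1 _),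
    fun p hp _ => one_sub_mul_pdS_oneSF0 ((hU p hp).2 _)⟩

lemma fderiv_div_eq_zero_of_solvesSystemOn (hGsol : SolvesSystemOn b c U G)
    (hFsol : SolvesSystemOn b c U F) {p : (Fin n → ℂ) × (Fin m → ℂ)} (hp : p ∈ U)
    (ht : ∀ i, 1 - p.1 i ≠ 0) (hs : ∀ j, 1 - p.2 j ≠ 0)
    (hG : DifferentiableAt ℂ (fun q => G q.1 q.2) p)
    (hF : DifferentiableAt ℂ (fun q => F q.1 q.2) p) (hFp : F p.1 p.2 ≠ 0) :
    fderiv ℂ (fun q => G q.1 q.2 / F q.1 q.2) p = 0 := by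
  have hQ : DifferentiableAt ℂ (fun q => G q.1 q.2 / F q.1 q.2) p := by
    fun_prop (disch := assumption)
  refine ContinuousLinearMap.eq_zero_of_map_single_prod _ (fun i => ?_) (fun j => ?_)
  · exact (hasDerivAt_update_fst hQ i).unique ((hasDerivAt_pdT hG i).div_eq_zero_of_same_ode
      (hasDerivAt_pdT hF i) (by simpa using hFp) (ht i)
      (by simpa using hGsol.1 p hp i) (by simpa using hFsol.1 p hp i))
  · exact (hasDerivAt_update_snd hQ j).unique ((hasDerivAt_pdS hG j).div_eq_zero_of_same_ode
      (hasDerivAt_pdS hF j) (by simpa using hFp) (hs j)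
      (by simpa using hGsol.2 p hp j) (by simpa using hFsol.2 p hp j))

theorem SolvesSystemOn.eqOn (hUo : IsOpen U) (hUc : Convex ℝ U)
    (hU : ∀ p ∈ U, (∀ i, 1 - p.1 i ≠ 0) ∧ ∀ j, 1 - p.2 j ≠ 0)
    (hGsol : SolvesSystemOn b c U G) (hFsol : SolvesSystemOn b c U F)
    (hG : DifferentiableOn ℂ (fun q => G q.1 q.2) U)
    (hF : DifferentiableOn ℂ (fun q => F q.1 q.2) U)
    (hF0 : ∀ p ∈ U, F p.1 p.2 ≠ 0) {p₀ : (Fin n → ℂ) × (Fin m → ℂ)} (hp₀ : p₀ ∈ U)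
    (h₀ : G p₀.1 p₀.2 = F p₀.1 p₀.2) : ∀ p ∈ U, G p.1 p.2 = F p.1 p.2 := by
  intro p hp
  have hQ : DifferentiableOn ℂ (fun q => G q.1 q.2 / F q.1 q.2) U := by
    simpa only [div_eq_mul_inv] using hG.fun_mul (hF.fun_inv hF0)
  have hconst : G p.1 p.2 / F p.1 p.2 = G p₀.1 p₀.2 / F p₀.1 p₀.2 :=
    hUc.is_const_of_fderivWithin_eq_zero hQ (fun q hq => by
      rw [fderivWithin_of_isOpen hUo hq]
      exact fderiv_div_eq_zero_of_solvesSystemOn hGsol hFsol hq (hU q hq).1 (hU q hq).2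
        (hG.differentiableAt (hUo.mem_nhds hq)) (hF.differentiableAt (hUo.mem_nhds hq))
        (hF0 q hq)) hp hp₀
  rwa [h₀, div_self (hF0 p₀ hp₀), div_eq_one_iff_eq (hF0 p hp)] at hconst

theorem exists_isOpen_eq_oneSF0_of_solvesSystemOn {α : ℝ} {a : ℂ} (hUo : IsOpen U)
    (hU0 : 0 ∈ U) (hG : DifferentiableOn ℂ (fun q => G q.1 q.2) U)
    (hGsol : SolvesSystemOn a (-(α : ℂ) * a) U G) (hG0 : G 0 0 = 1) :
    ∃ V : Set ((Fin n → ℂ) × (Fin m → ℂ)), IsOpen V ∧ 0 ∈ V ∧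
      ∀ p ∈ V, G p.1 p.2 = oneSF0 n m α a p.1 p.2 := by
  obtain ⟨r, hr, hrU⟩ := Metric.isOpen_iff.1 hUo 0 hU0
  set V : Set ((Fin n → ℂ) × (Fin m → ℂ)) := Metric.ball 0 (min r 1)
  have hVU : V ⊆ U := (Metric.ball_subset_ball (min_le_left _ _)).trans hrU
  have hV0 : (0 : (Fin n → ℂ) × (Fin m → ℂ)) ∈ V := Metric.mem_ball_self (lt_min hr one_pos)
  have hVslit (p) (hp : p ∈ V) : (∀ i, p.1 i ∈ slitOne) ∧ ∀ j, p.2 j ∈ slitOne :=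
    mem_slitOne_of_mem_ball (Metric.ball_subset_ball (min_le_right _ _) hp)
  refine ⟨V, Metric.isOpen_ball, hV0, SolvesSystemOn.eqOn Metric.isOpen_ball (convex_ball _ _)
    (fun p hp => ⟨fun i => one_sub_ne_zero_of_mem_slitOne ((hVslit p hp).1 i),
      fun j => one_sub_ne_zero_of_mem_slitOne ((hVslit p hp).2 j)⟩)
    ⟨fun p hp => hGsol.1 p (hVU hp), fun p hp => hGsol.2 p (hVU hp)⟩
    (solvesSystemOn_oneSF0 α a hVslit) (hG.mono hVU)
    (fun p hp => (differentiableAt_oneSF0 (hVslit p hp).1 (hVslit p hp).2).differentiableWithinAt)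
    (fun p hp => oneSF0_ne_zero (hVslit p hp).1 (hVslit p hp).2) hV0 ?_⟩
  simpa [oneSF0] using hG0

end Uniqueness

/-- the product `F(t,s) = ∏ (1-tᵢ)^{-a} ∏ (1-sⱼ)^{αa}` satisfies
`(1-tᵢ)∂F/∂tᵢ = aF`, `(1-sⱼ)∂F/∂sⱼ = -αaF`, the cancellation condition at `tᵢ = sⱼ`, and
`F(0,…,0) = 1`; moreover it is the unique analytic function near the origin with these
properties. -/
theorem stmt14 (n m : ℕ) (α : ℝ) (hα : 0 < α) (a : ℂ) :
    (∀ (t : Fin n → ℂ) (s : Fin m → ℂ), (∀ i, t i ∈ slitOne) → (∀ j, s j ∈ slitOne) →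
      ∀ i, (1 - t i) * pdT (oneSF0 n m α a) i t s = a * oneSF0 n m α a t s)
    ∧ (∀ (t : Fin n → ℂ) (s : Fin m → ℂ), (∀ i, t i ∈ slitOne) → (∀ j, s j ∈ slitOne) →
      ∀ j, (1 - s j) * pdS (oneSF0 n m α a) j t s = -(α : ℂ) * a * oneSF0 n m α a t s)
    ∧ (∀ (t : Fin n → ℂ) (s : Fin m → ℂ), (∀ i, t i ∈ slitOne) → (∀ j, s j ∈ slitOne) →
      ∀ i j, t i = s j →
        pdT (oneSF0 n m α a) i t s + (1 / (α : ℂ)) * pdS (oneSF0 n m α a) j t s = 0)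
    ∧ oneSF0 n m α a 0 0 = 1
    ∧ (∀ (U : Set ((Fin n → ℂ) × (Fin m → ℂ))), IsOpen U → (0, 0) ∈ U →
      ∀ G : (Fin n → ℂ) → (Fin m → ℂ) → ℂ,
        AnalyticOnNhd ℂ (fun p => G p.1 p.2) U →
        (∀ t s, (t, s) ∈ U → ∀ i, (1 - t i) * pdT G i t s = a * G t s) →
        (∀ t s, (t, s) ∈ U → ∀ j, (1 - s j) * pdS G j t s = -(α : ℂ) * a * G t s) →
        G 0 0 = 1 →
        ∃ V : Set ((Fin n → ℂ) × (Fin m → ℂ)), IsOpen V ∧ (0, 0) ∈ V ∧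
          ∀ p ∈ V, G p.1 p.2 = oneSF0 n m α a p.1 p.2) :=
  ⟨fun _ _ ht _ i => one_sub_mul_pdT_oneSF0 (ht i),
    fun _ _ _ hs j => one_sub_mul_pdS_oneSF0 (hs j),
    fun _ _ ht hs i j hij => pdT_add_one_div_mul_pdS_oneSF0 hα.ne' (ht i) (hs j) hij,
    by simp [oneSF0],
    fun _ hUo hU0 _ hG hGt hGs hG0 => exists_isOpen_eq_oneSF0_of_solvesSystemOn hUo hU0
      hG.differentiableOn ⟨fun p hp => hGt p.1 p.2 hp, fun p hp => hGs p.1 p.2 hp⟩ hG0⟩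
end

section
/- Let n, m ≥ 0 be integers, α > 0 real, a, b, c ∈ ℂ, and let 0 ≤ p ≤ n and 0 ≤ q ≤ m. Suppose F is analytic on an open polydisc around the origin in ℂ^{n+m} and satisfies every equation of the deformed hypergeometric system in the n+m variables (t₁,…,t_n, s₁,…,s_m) with parameters (α, a, b, c) at every point of the polydisc at which t₁,…,t_n are pairwise distinct, s₁,…,s_m are pairwise distinct, and t_i ≠ s_j for all i, j. Then the restricted function F_{p,q}(t₁,…,t_p, s₁,…,s_q) := F(t₁,…,t_p, 0,…,0, s₁,…,s_q, 0,…,0) satisfies every equation of the deformed hypergeometric system in the p+q variables (t₁,…,t_p, s₁,…,s_q) with the same parameters (α, a, b, c), at every point of the corresponding polydisc at which t₁,…,t_p, s₁,…,s_q are all nonzero, t₁,…,t_p are pairwise distinct, s₁,…,s_q are pairwise distinct, and t_i ≠ s_j for all i ≤ p, j ≤ q. -/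
open Finset

/-- The deformed hypergeometric system with parameters `(α, a, b, c)` for a function
`F(t₁,…,t_n,s₁,…,s_m)`, at the point `(t,s)`. -/
def DeformedSystemAt (n m : ℕ) (α : ℝ) (a b c : ℂ)
    (F : (Fin n → ℂ) → (Fin m → ℂ) → ℂ) (t : Fin n → ℂ) (s : Fin m → ℂ) : Prop :=
  (∀ i : Fin n,
    t i * (1 - t i) * pdT (pdT F i) i t s + (c - (a + b + 1) * t i) * pdT F i t s
      - a * b * F t s
      + (1 / (α : ℂ)) * ∑ k ∈ univ.filter (fun k => k ≠ i),
          t k / (t i - t k) * ((1 - t i) * pdT F i t s - (1 - t k) * pdT F k t s)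
      - ∑ k : Fin m, s k / (t i - s k) *
          ((1 - t i) * pdT F i t s + (1 / (α : ℂ)) * (1 - s k) * pdS F k t s) = 0)
  ∧ (∀ j : Fin m,
    -(1 / (α : ℂ)) * s j * (1 - s j) * pdS (pdS F j) j t s
      + (c - (a + b + 1 - (1 + 1 / (α : ℂ))) * s j) * pdS F j t s
      + (α : ℂ) * a * b * F t s
      - ∑ k ∈ univ.filter (fun k => k ≠ j),
          s k / (s j - s k) * ((1 - s j) * pdS F j t s - (1 - s k) * pdS F k t s)
      + ∑ k : Fin n, t k / (s j - t k) *
          ((1 / (α : ℂ)) * (1 - s j) * pdS F j t s + (1 - t k) * pdT F k t s) = 0)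

/-! The point `x = (t', 0, s', 0)` is not generic, but the generic points (all `n + m`
coordinates pairwise distinct) are dense, so inside the polydisc they accumulate at `x`, and the
full system holds at each of them. The equation of a surviving variable `t_i` (or `s_j`) is
continuous at `x`: analyticity makes all partial derivatives continuous, and its denominators do
not vanish at `x`, since `t_i` is nonzero and distinct from the other surviving variables. Hence
it holds at `x`. There every term indexed by a variable set to zero has that zero as numerator,
so the equation at `x` is exactly the corresponding equation of the restricted system. -/

open Function Filter Topology

theorem dense_setOf_injective {ι 𝕜 : Type*} [Finite ι] [NontriviallyNormedField 𝕜] :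
    Dense {f : ι → 𝕜 | Injective f} := by
  classical
  have hne : ∀ a b : ι, a ≠ b → Dense {f : ι → 𝕜 | f a ≠ f b} := by
    intro a b hab
    let K := LinearMap.ker (LinearMap.proj (R := 𝕜) (φ := fun _ : ι => 𝕜) a - LinearMap.proj b)
    have hK : (K : Set (ι → 𝕜))ᶜ = {f | f a ≠ f b} := by ext; simp [K, sub_eq_zero]
    rw [← hK, ← interior_eq_empty_iff_dense_compl]
    by_contra h
    have h1 := (K.eq_top_of_nonempty_interior' (Set.nonempty_iff_ne_empty.2 h)).ge
      (Submodule.mem_top (x := Pi.single a 1))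
    simp [K, hab.symm] at h1
  have : {f : ι → 𝕜 | Injective f}
      = ⋂₀ Set.range fun p : {p : ι × ι // p.1 ≠ p.2} => {f : ι → 𝕜 | f p.1.1 ≠ f p.1.2} := by
    ext f
    simp [Injective, not_imp_not]
  rw [this]
  refine (Set.finite_range _).dense_sInter ?_ ?_ <;> rintro _ ⟨⟨⟨a, b⟩, hab⟩, rfl⟩
  · exact isOpen_ne_fun (continuous_apply a) (continuous_apply b)
  · exact hne a b hab

theorem dense_setOf_injective_sumElim {ι κ 𝕜 : Type*} [Finite ι] [Finite κ]
    [NontriviallyNormedField 𝕜] :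
    Dense {x : (ι → 𝕜) × (κ → 𝕜) | Injective (Sum.elim x.1 x.2)} :=
  dense_setOf_injective.preimage Homeomorph.sumArrowHomeomorphProdArrow.symm.isOpenMap

section PartialDerivatives

variable {n m : ℕ} {F : (Fin n → ℂ) → (Fin m → ℂ) → ℂ}

theorem pdT_eq_fderiv {t : Fin n → ℂ} {s : Fin m → ℂ} (i : Fin n)
    (hF : DifferentiableAt ℂ (uncurry F) (t, s)) :
    pdT F i t s = fderiv ℂ (uncurry F) (t, s) (Pi.single i 1, 0) := by
  rw [← update_eq_self i t] at hF
  have := hF.hasFDerivAt.comp_hasDerivAt (t i)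
    ((hasDerivAt_update t i (t i)).prodMk (hasDerivAt_const (t i) s))
  rw [update_eq_self] at this
  exact this.deriv

theorem pdS_eq_fderiv {t : Fin n → ℂ} {s : Fin m → ℂ} (j : Fin m)
    (hF : DifferentiableAt ℂ (uncurry F) (t, s)) :
    pdS F j t s = fderiv ℂ (uncurry F) (t, s) (0, Pi.single j 1) := by
  rw [← update_eq_self j s] at hF
  have := hF.hasFDerivAt.comp_hasDerivAt (s j)
    ((hasDerivAt_const (s j) t).prodMk (hasDerivAt_update s j (s j)))
  rw [update_eq_self] at this
  exact this.deriv

variable {U : Set ((Fin n → ℂ) × (Fin m → ℂ))}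

theorem AnalyticOnNhd.uncurry_pdT (hU : IsOpen U) (hF : AnalyticOnNhd ℂ (uncurry F) U)
    (i : Fin n) : AnalyticOnNhd ℂ (uncurry (pdT F i)) U :=
  ((ContinuousLinearMap.apply ℂ ℂ ((Pi.single i 1 : Fin n → ℂ), (0 : Fin m → ℂ))).comp_analyticOnNhd
    hF.fderiv).congr hU fun x hx => (pdT_eq_fderiv i (hF x hx).differentiableAt).symm

theorem AnalyticOnNhd.uncurry_pdS (hU : IsOpen U) (hF : AnalyticOnNhd ℂ (uncurry F) U)
    (j : Fin m) : AnalyticOnNhd ℂ (uncurry (pdS F j)) U :=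
  ((ContinuousLinearMap.apply ℂ ℂ ((0 : Fin n → ℂ), (Pi.single j 1 : Fin m → ℂ))).comp_analyticOnNhd
    hF.fderiv).congr hU fun x hx => (pdS_eq_fderiv j (hF x hx).differentiableAt).symm

end PartialDerivatives

section Residuals

variable (n m : ℕ) (α : ℝ) (a b c : ℂ) (F : (Fin n → ℂ) → (Fin m → ℂ) → ℂ)

noncomputable def residualT (i : Fin n) (t : Fin n → ℂ) (s : Fin m → ℂ) : ℂ :=
  t i * (1 - t i) * pdT (pdT F i) i t s + (c - (a + b + 1) * t i) * pdT F i t s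
    - a * b * F t s
    + (1 / (α : ℂ)) * ∑ k ∈ univ.filter (fun k => k ≠ i),
        t k / (t i - t k) * ((1 - t i) * pdT F i t s - (1 - t k) * pdT F k t s)
    - ∑ k : Fin m, s k / (t i - s k) *
        ((1 - t i) * pdT F i t s + (1 / (α : ℂ)) * (1 - s k) * pdS F k t s)

noncomputable def residualS (j : Fin m) (t : Fin n → ℂ) (s : Fin m → ℂ) : ℂ :=
  -(1 / (α : ℂ)) * s j * (1 - s j) * pdS (pdS F j) j t s
    + (c - (a + b + 1 - (1 + 1 / (α : ℂ))) * s j) * pdS F j t s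
    + (α : ℂ) * a * b * F t s
    - ∑ k ∈ univ.filter (fun k => k ≠ j),
        s k / (s j - s k) * ((1 - s j) * pdS F j t s - (1 - s k) * pdS F k t s)
    + ∑ k : Fin n, t k / (s j - t k) *
        ((1 / (α : ℂ)) * (1 - s j) * pdS F j t s + (1 - t k) * pdT F k t s)

theorem deformedSystemAt_iff {t : Fin n → ℂ} {s : Fin m → ℂ} :
    DeformedSystemAt n m α a b c F t s ↔
      (∀ i, residualT n m α a b c F i t s = 0) ∧ (∀ j, residualS n m α a b c F j t s = 0) :=
  Iff.rfl

variable {n m α a b c F} {U : Set ((Fin n → ℂ) × (Fin m → ℂ))}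
  {x : (Fin n → ℂ) × (Fin m → ℂ)}

theorem continuousAt_residualT (hU : IsOpen U) (hF : AnalyticOnNhd ℂ (uncurry F) U) (hx : x ∈ U)
    (i : Fin n) (hT : ∀ k ≠ i, x.1 k ≠ x.1 i) (hS : ∀ k, x.2 k ≠ x.1 i) :
    ContinuousAt (fun y => residualT n m α a b c F i y.1 y.2) x := by
  have hF0 : ContinuousAt (fun y => F y.1 y.2) x := (hF x hx).continuousAt
  have hT1 (k : Fin n) : ContinuousAt (fun y => pdT F k y.1 y.2) x :=
    (hF.uncurry_pdT hU k x hx).continuousAt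
  have hS1 (k : Fin m) : ContinuousAt (fun y => pdS F k y.1 y.2) x :=
    (hF.uncurry_pdS hU k x hx).continuousAt
  have hT2 : ContinuousAt (fun y => pdT (pdT F i) i y.1 y.2) x :=
    ((hF.uncurry_pdT hU i).uncurry_pdT hU i x hx).continuousAt
  refine .sub (.add (by fun_prop) (.mul (by fun_prop) (tendsto_finsetSum _ fun k hk => ?_)))
    (tendsto_finsetSum _ fun k _ => ?_)
  · exact ContinuousAt.mul (ContinuousAt.div (by fun_prop) (by fun_prop)
      (sub_ne_zero.2 (hT k (by simpa using hk)).symm)) (by fun_prop)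
  · exact ContinuousAt.mul (ContinuousAt.div (by fun_prop) (by fun_prop)
      (sub_ne_zero.2 (hS k).symm)) (by fun_prop)

theorem continuousAt_residualS (hU : IsOpen U) (hF : AnalyticOnNhd ℂ (uncurry F) U) (hx : x ∈ U)
    (j : Fin m) (hS : ∀ k ≠ j, x.2 k ≠ x.2 j) (hT : ∀ k, x.1 k ≠ x.2 j) :
    ContinuousAt (fun y => residualS n m α a b c F j y.1 y.2) x := by
  have hF0 : ContinuousAt (fun y => F y.1 y.2) x := (hF x hx).continuousAt
  have hT1 (k : Fin n) : ContinuousAt (fun y => pdT F k y.1 y.2) x :=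
    (hF.uncurry_pdT hU k x hx).continuousAt
  have hS1 (k : Fin m) : ContinuousAt (fun y => pdS F k y.1 y.2) x :=
    (hF.uncurry_pdS hU k x hx).continuousAt
  have hS2 : ContinuousAt (fun y => pdS (pdS F j) j y.1 y.2) x :=
    ((hF.uncurry_pdS hU j).uncurry_pdS hU j x hx).continuousAt
  refine .add (.sub (by fun_prop) (tendsto_finsetSum _ fun k hk => ?_))
    (tendsto_finsetSum _ fun k _ => ?_)
  · exact ContinuousAt.mul (ContinuousAt.div (by fun_prop) (by fun_prop)
      (sub_ne_zero.2 (hS k (by simpa using hk)).symm)) (by fun_prop)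
  · exact ContinuousAt.mul (ContinuousAt.div (by fun_prop) (by fun_prop)
      (sub_ne_zero.2 (hT k).symm)) (by fun_prop)

end Residuals

section ExtendByZero

variable {R : Type*} [Zero R] {n p : ℕ}

def extendByZero (u : Fin p → R) : Fin n → R :=
  fun i => if h : (i : ℕ) < p then u ⟨i, h⟩ else 0

@[simp]
theorem extendByZero_castLE (hp : p ≤ n) (u : Fin p → R) (i : Fin p) :
    extendByZero u (Fin.castLE hp i) = u i := by
  simp [extendByZero]

theorem extendByZero_of_notMem_range (hp : p ≤ n) (u : Fin p → R) {k : Fin n}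
    (hk : k ∉ Set.range (Fin.castLE hp)) : extendByZero u k = 0 := by
  simp_all [extendByZero, Fin.range_castLE]

theorem extendByZero_update (hp : p ≤ n) (u : Fin p → R) (i : Fin p) (z : R) :
    extendByZero (update u i z) = update (extendByZero u : Fin n → R) (Fin.castLE hp i) z := by
  funext k
  by_cases hk : k ∈ Set.range (Fin.castLE hp)
  · obtain ⟨j, rfl⟩ := hk
    simp [update_apply, (Fin.castLE_injective hp).eq_iff]
  · rw [update_of_ne (by grind), extendByZero_of_notMem_range hp _ hk,
      extendByZero_of_notMem_range hp _ hk]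

theorem extendByZero_ne {v : Fin p → R} {w : R} (hw : w ≠ 0) (hv : ∀ j, v j ≠ w) (k : Fin n) :
    extendByZero v k ≠ w := by
  unfold extendByZero; split_ifs <;> simp [*, hw.symm]

theorem extendByZero_ne_castLE (hp : p ≤ n) {u : Fin p → R} (hu : Injective u)
    (hu0 : ∀ j, u j ≠ 0) {i : Fin p} {k : Fin n} (hk : k ≠ Fin.castLE hp i) :
    extendByZero u k ≠ extendByZero u (Fin.castLE hp i) := by
  rw [extendByZero_castLE]
  by_cases hk' : k ∈ Set.range (Fin.castLE hp)
  · obtain ⟨j, rfl⟩ := hk'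
    exact extendByZero_castLE hp u j ▸ hu.ne (ne_of_apply_ne _ hk)
  · exact extendByZero_of_notMem_range hp u hk' ▸ (hu0 i).symm

end ExtendByZero

theorem Fin.sum_eq_sum_castLE {M : Type*} [AddCommMonoid M] {n p : ℕ} (hp : p ≤ n)
    (g : Fin n → M) (hg : ∀ k ∉ Set.range (Fin.castLE hp), g k = 0) :
    ∑ k, g k = ∑ i : Fin p, g (Fin.castLE hp i) :=
  (Fintype.sum_of_injective _ (Fin.castLE_injective hp) _ g hg fun _ => rfl).symm

theorem Fin.sum_filter_ne_castLE {M : Type*} [AddCommMonoid M] {n p : ℕ} (hp : p ≤ n)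
    (g : Fin n → M) (hg : ∀ k ∉ Set.range (Fin.castLE hp), g k = 0) (i : Fin p) :
    ∑ k ∈ univ.filter (· ≠ Fin.castLE hp i), g k
      = ∑ k ∈ univ.filter (· ≠ i), g (Fin.castLE hp k) := by
  rw [sum_filter, sum_filter, Fin.sum_eq_sum_castLE hp _ fun k hk => by simp [hg k hk]]
  simp only [(Fin.castLE_injective hp).ne_iff]

section Restriction

variable {n m p q : ℕ}

def restrictByZero (F : (Fin n → ℂ) → (Fin m → ℂ) → ℂ) : (Fin p → ℂ) → (Fin q → ℂ) → ℂ :=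
  fun u v => F (extendByZero u) (extendByZero v)

theorem pdT_restrictByZero (hp : p ≤ n) (F : (Fin n → ℂ) → (Fin m → ℂ) → ℂ) (i : Fin p) :
    pdT (restrictByZero F : (Fin p → ℂ) → (Fin q → ℂ) → ℂ) i
      = restrictByZero (pdT F (Fin.castLE hp i)) := by
  funext u v
  simp only [pdT, restrictByZero, extendByZero_update hp, extendByZero_castLE]

theorem pdS_restrictByZero (hq : q ≤ m) (F : (Fin n → ℂ) → (Fin m → ℂ) → ℂ) (j : Fin q) :
    pdS (restrictByZero F : (Fin p → ℂ) → (Fin q → ℂ) → ℂ) j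
      = restrictByZero (pdS F (Fin.castLE hq j)) := by
  funext u v
  simp only [pdS, restrictByZero, extendByZero_update hq, extendByZero_castLE]

variable {α : ℝ} {a b c : ℂ} {F : (Fin n → ℂ) → (Fin m → ℂ) → ℂ} {u : Fin p → ℂ} {v : Fin q → ℂ}

theorem residualT_restrictByZero (hp : p ≤ n) (hq : q ≤ m) (i : Fin p) :
    residualT p q α a b c (restrictByZero F) i u v
      = residualT n m α a b c F (Fin.castLE hp i) (extendByZero u) (extendByZero v) := by
  rw [residualT, residualT, Fin.sum_filter_ne_castLE hp _ (fun k hk => by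
      simp [extendByZero_of_notMem_range hp u hk]),
    Fin.sum_eq_sum_castLE hq _ (fun k hk => by simp [extendByZero_of_notMem_range hq v hk])]
  simp only [pdT_restrictByZero hp, pdS_restrictByZero hq, restrictByZero, extendByZero_castLE]

theorem residualS_restrictByZero (hp : p ≤ n) (hq : q ≤ m) (j : Fin q) :
    residualS p q α a b c (restrictByZero F) j u v
      = residualS n m α a b c F (Fin.castLE hq j) (extendByZero u) (extendByZero v) := by
  rw [residualS, residualS, Fin.sum_filter_ne_castLE hq _ (fun k hk => by
      simp [extendByZero_of_notMem_range hq v hk]),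
    Fin.sum_eq_sum_castLE hp _ (fun k hk => by simp [extendByZero_of_notMem_range hp u hk])]
  simp only [pdT_restrictByZero hp, pdS_restrictByZero hq, restrictByZero, extendByZero_castLE]

end Restriction

theorem stmt19_general (n m p q : ℕ) (hp : p ≤ n) (hq : q ≤ m) (α : ℝ) (a b c : ℂ)
    (r : ℝ) (hr : 0 < r)
    (F : (Fin n → ℂ) → (Fin m → ℂ) → ℂ)
    (hFa : AnalyticOnNhd ℂ (fun pt : (Fin n → ℂ) × (Fin m → ℂ) => F pt.1 pt.2)
      {pt | (∀ i, ‖pt.1 i‖ < r) ∧ (∀ j, ‖pt.2 j‖ < r)})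
    (hFsys : ∀ (t : Fin n → ℂ) (s : Fin m → ℂ),
      (∀ i, ‖t i‖ < r) → (∀ j, ‖s j‖ < r) →
      Function.Injective t → Function.Injective s → (∀ i j, t i ≠ s j) →
      DeformedSystemAt n m α a b c F t s)
    (t' : Fin p → ℂ) (s' : Fin q → ℂ)
    (ht'r : ∀ i, ‖t' i‖ < r) (hs'r : ∀ j, ‖s' j‖ < r)
    (ht'0 : ∀ i, t' i ≠ 0) (hs'0 : ∀ j, s' j ≠ 0)
    (ht' : Function.Injective t') (hs' : Function.Injective s')
    (hts : ∀ i j, t' i ≠ s' j) :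
    DeformedSystemAt p q α a b c
      (fun u v => F (fun i => if h : (i : ℕ) < p then u ⟨(i : ℕ), h⟩ else 0)
        (fun j => if h : (j : ℕ) < q then v ⟨(j : ℕ), h⟩ else 0)) t' s' := by
  set U : Set ((Fin n → ℂ) × (Fin m → ℂ)) := {pt | (∀ i, ‖pt.1 i‖ < r) ∧ (∀ j, ‖pt.2 j‖ < r)}
  have hU : IsOpen U := by
    simp only [U, Set.ofPred_and, Set.ofPred_forall]
    exact (isOpen_iInter_of_finite fun i => isOpen_lt (by fun_prop) continuous_const).inter
      (isOpen_iInter_of_finite fun j => isOpen_lt (by fun_prop) continuous_const)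
  set x : (Fin n → ℂ) × (Fin m → ℂ) := (extendByZero t', extendByZero s')
  have hx : x ∈ U := by
    constructor <;> intro k <;> simp only [x, extendByZero] <;> split_ifs <;> simp [*]
  have hfreq : ∃ᶠ y in 𝓝 x, DeformedSystemAt n m α a b c F y.1 y.2 := by
    refine ((mem_closure_iff_frequently.1 (dense_setOf_injective_sumElim x)).and_eventually
      (hU.mem_nhds hx)).mono fun y ⟨hinj, hyU⟩ => ?_
    obtain ⟨hy1, hy2, hy12⟩ := Sum.elim_injective.1 hinj
    exact hFsys y.1 y.2 hyU.1 hyU.2 hy1 hy2 hy12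
  change DeformedSystemAt p q α a b c (restrictByZero F) t' s'
  rw [deformedSystemAt_iff]
  refine ⟨fun i => ?_, fun j => ?_⟩
  · rw [residualT_restrictByZero hp hq]
    refine isClosed_singleton.mem_of_frequently_of_tendsto (hfreq.mono fun y hy => hy.1 _)
      (continuousAt_residualT hU hFa hx _ (fun k hk => extendByZero_ne_castLE hp ht' ht'0 hk)
        fun k => by simpa [x] using extendByZero_ne (ht'0 i) (fun j => (hts i j).symm) k)
  · rw [residualS_restrictByZero hp hq]
    refine isClosed_singleton.mem_of_frequently_of_tendsto (hfreq.mono fun y hy => hy.2 _)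
      (continuousAt_residualS hU hFa hx _ (fun k hk => extendByZero_ne_castLE hq hs' hs'0 hk)
        fun k => by simpa [x] using extendByZero_ne (hs'0 j) (fun i => hts i j) k)

/-- if `F` is analytic on an open polydisc around the origin and satisfies the
deformed hypergeometric system in `n + m` variables there (at points with the required
distinctness), then restricting to the first `p ≤ n` even and `q ≤ m` odd variables (setting
the remaining variables to zero) yields a solution of the deformed hypergeometric system in
`p + q` variables with the same parameters, at points with all coordinates nonzero,
pairwise distinct within each group, and distinct across groups. -/
theorem stmt19 (n m p q : ℕ) (hp : p ≤ n) (hq : q ≤ m) (α : ℝ) (hα : 0 < α) (a b c : ℂ)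
    (r : ℝ) (hr : 0 < r)
    (F : (Fin n → ℂ) → (Fin m → ℂ) → ℂ)
    (hFa : AnalyticOnNhd ℂ (fun pt : (Fin n → ℂ) × (Fin m → ℂ) => F pt.1 pt.2)
      {pt | (∀ i, ‖pt.1 i‖ < r) ∧ (∀ j, ‖pt.2 j‖ < r)})
    (hFsys : ∀ (t : Fin n → ℂ) (s : Fin m → ℂ),
      (∀ i, ‖t i‖ < r) → (∀ j, ‖s j‖ < r) →
      Function.Injective t → Function.Injective s → (∀ i j, t i ≠ s j) →
      DeformedSystemAt n m α a b c F t s)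
    (t' : Fin p → ℂ) (s' : Fin q → ℂ)
    (ht'r : ∀ i, ‖t' i‖ < r) (hs'r : ∀ j, ‖s' j‖ < r)
    (ht'0 : ∀ i, t' i ≠ 0) (hs'0 : ∀ j, s' j ≠ 0)
    (ht' : Function.Injective t') (hs' : Function.Injective s')
    (hts : ∀ i j, t' i ≠ s' j) :
    DeformedSystemAt p q α a b c
      (fun u v => F (fun i => if h : (i : ℕ) < p then u ⟨(i : ℕ), h⟩ else 0)
        (fun j => if h : (j : ℕ) < q then v ⟨(j : ℕ), h⟩ else 0)) t' s' :=
  stmt19_general n m p q hp hq α a b c r hr F hFa hFsys t' s' ht'r hs'r ht'0 hs'0 ht' hs' hts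
end
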